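/- arXiv:1911.11936 — 2 statements merged into one kernel-verified Lean document; each statement's English description precedes it below -/
import Mathlib

section
/- Let T = {0, ±1, …, ±k}, and for v ∈ {±1}^{n×k} let h^v: T^n → {0,1} be defined by h^v(t) = 1 iff t has exactly one nonzero coordinate, namely coordinate i equal to v_{i,j}·j for some j ∈ [k], and let D^v be the product distribution on T^n whose i-th marginal puts mass 1−1/n on 0, mass (1+ε)/(2nk) on v_{i,j}·j and mass (1−ε)/(2nk) on −v_{i,j}·j for each j ∈ [k]. Then for all v, v′ ∈ {±1}^{n×k}, h^v(D^v) − h^{v′}(D^v) = (1−1/n)^{n−1} · (ε/(nk)) · d(v, v′), where d(v, v′) is the Hamming distance between v and v′. -/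
/-- Sign encoding: `true ↦ +1`, `false ↦ −1`. -/
def sgn (b : Bool) : ℤ := if b then 1 else -1

/-- The hard hypothesis `h^v`: value `1` iff `t` has exactly one nonzero coordinate,
namely coordinate `i` equal to `v_{i,j} · j` for some `j ∈ [k]` (here `j ∈ Fin k`
encodes the value `j+1 ∈ {1,…,k}`). -/
noncomputable def hyp (n k : ℕ) (v : Fin n → Fin k → Bool) (t : Fin n → ℤ) : ℝ :=
  open Classical in
  if (∃ i : Fin n, ∃ j : Fin k,
      (∀ i' : Fin n, i' ≠ i → t i' = 0) ∧ t i = sgn (v i j) * ((j : ℤ) + 1)) then 1 else 0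

/-- The `i`-th marginal mass function of the hard distribution `D^v`:
mass `1 − 1/n` on `0`, mass `(1+ε)/(2nk)` on `v_{i,j}·j` and `(1−ε)/(2nk)` on `−v_{i,j}·j`. -/
noncomputable def marg (n k : ℕ) (ε : ℝ) (v : Fin n → Fin k → Bool) (i : Fin n) (x : ℤ) : ℝ :=
  if x = 0 then 1 - 1 / (n : ℝ)
  else if hx : 1 ≤ x.natAbs ∧ x.natAbs ≤ k then
    (if (0 < x) = (v i ⟨x.natAbs - 1, by omega⟩ = true)
      then (1 + ε) / (2 * n * k) else (1 - ε) / (2 * n * k))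
  else 0

/-- The support `T = {0, ±1, …, ±k}` as a finset of `ℤ`. -/
noncomputable def Tbox (k : ℕ) : Finset ℤ := Finset.Icc (-(k : ℤ)) k

/-- Expectation of `h` under the product distribution with marginal
mass functions `f i` supported on `{0,±1,…,±k}`. -/
noncomputable def expZ (n k : ℕ) (f : Fin n → ℤ → ℝ) (h : (Fin n → ℤ) → ℝ) : ℝ :=
  ∑ t ∈ Fintype.piFinset (fun _ : Fin n => Tbox k), (∏ i, f i (t i)) * h t

/-- Probability mass of the sample tuple `s` under `N` i.i.d. draws from `D^v`. -/
noncomputable def sampleP (n k N : ℕ) (ε : ℝ) (v : Fin n → Fin k → Bool)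
    (s : Fin N → Fin n → ℤ) : ℝ :=
  ∏ m : Fin N, ∏ i : Fin n, marg n k ε v i (s m i)

/-- The sample space: `N`-tuples of points of `{0,±1,…,±k}ⁿ`. -/
noncomputable def sampleBox (n k N : ℕ) : Finset (Fin N → Fin n → ℤ) :=
  Fintype.piFinset fun _ : Fin N => Fintype.piFinset fun _ : Fin n => Tbox k

/-- `Opt_H(D^v)`: the optimal expected value over the hypothesis class `H = {h^w}`. -/
noncomputable def optZ (n k : ℕ) (ε : ℝ) (v : Fin n → Fin k → Bool) : ℝ :=
  ⨆ w : Fin n → Fin k → Bool, expZ n k (marg n k ε v) (hyp n k w)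

/-- Hamming distance between `v` and `v'`. -/
def hamming {n k : ℕ} (v v' : Fin n → Fin k → Bool) : ℕ :=
  (Finset.univ.filter fun p : Fin n × Fin k => v p.1 p.2 ≠ v' p.1 p.2).card

/-!
`h^w` is the indicator of the `nk` points `signedPoint w (i, j)`, which carry
`w_{i,j} · (j+1)` in coordinate `i` and `0` elsewhere. Under `D^v` such a point has mass
`(1 − 1/n)^{n−1}` times `(1 + ε)/(2nk)` if `w_{i,j} = v_{i,j}` and `(1 − ε)/(2nk)` otherwise,
so `h^v(D^v) − h^{v'}(D^v)` collects `(1 − 1/n)^{n−1} · ε/(nk)` from each index where `v`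
and `v'` differ.
-/

lemma natAbs_sgn_mul (b : Bool) (m : ℤ) : (sgn b * m).natAbs = m.natAbs := by
  cases b <;> simp [sgn]

lemma prod_apply_single_of_apply_zero {ι M R : Type*} [Fintype ι] [DecidableEq ι] [Zero M]
    [CommMonoid R] (f : ι → M → R) {c : R} (hf : ∀ i, f i 0 = c) (i₀ : ι) (x : M) :
    ∏ i, f i ((Pi.single i₀ x : ι → M) i) = c ^ (Fintype.card ι - 1) * f i₀ x := by
  rw [Fintype.prod_eq_prod_compl_mul i₀, Pi.single_eq_same,
    Finset.prod_congr rfl fun i hi => by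
      rw [Pi.single_eq_of_ne (by simpa using hi), hf],
    Finset.prod_const, Finset.card_compl, Finset.card_singleton]

section HardInstance

variable {n k : ℕ}

def signedPoint (w : Fin n → Fin k → Bool) (p : Fin n × Fin k) : Fin n → ℤ :=
  Pi.single p.1 (sgn (w p.1 p.2) * ((p.2 : ℤ) + 1))

lemma signedPoint_injective (w : Fin n → Fin k → Bool) :
    Function.Injective (signedPoint w) := by
  rintro ⟨i, j⟩ ⟨i', j'⟩ h
  have hval : ∀ (b : Bool) (m : Fin k), sgn b * ((m : ℤ) + 1) ≠ 0 := fun b m => by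
    cases b <;> simp [sgn] <;> omega
  have hi : i = i' := by
    by_contra hne
    have := congrFun h i
    simp only [signedPoint, Pi.single_eq_same, Pi.single_eq_of_ne hne] at this
    exact hval _ _ this
  subst hi
  have hj := congrArg Int.natAbs (Pi.single_injective i h)
  simp only [natAbs_sgn_mul] at hj
  exact Prod.ext rfl (Fin.ext (show (j : ℕ) = j' by omega))

lemma signedPoint_mem_piFinset (w : Fin n → Fin k → Bool) (p : Fin n × Fin k) :
    signedPoint w p ∈ Fintype.piFinset fun _ : Fin n => Tbox k := by
  rw [Fintype.mem_piFinset]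
  intro i
  have hj := p.2.isLt
  rw [signedPoint, Pi.single_apply, Tbox, Finset.mem_Icc]
  split_ifs
  · cases w p.1 p.2 <;> simp [sgn] <;> omega
  · omega

lemma hyp_eq_indicator (w : Fin n → Fin k → Bool) :
    hyp n k w = (Set.range (signedPoint w)).indicator 1 := by
  ext t
  have hsupp : (∃ i j, (∀ i' ≠ i, t i' = 0) ∧ t i = sgn (w i j) * ((j : ℤ) + 1)) ↔
      t ∈ Set.range (signedPoint w) := by
    constructor
    · rintro ⟨i, j, hzero, hi⟩
      refine ⟨(i, j), funext fun i' => ?_⟩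
      by_cases h : i' = i
      · subst h; simp [signedPoint, hi]
      · simp [signedPoint, h, hzero i' h]
    · rintro ⟨⟨i, j⟩, rfl⟩
      exact ⟨i, j, fun i' h => Pi.single_eq_of_ne h _, Pi.single_eq_same _ _⟩
  simp only [hyp, Set.indicator_apply, hsupp, Pi.one_apply]

lemma expZ_hyp (f : Fin n → ℤ → ℝ) (w : Fin n → Fin k → Bool) :
    expZ n k f (hyp n k w) = ∑ p, ∏ i, f i (signedPoint w p i) := by
  classical
  have hrange : Set.range (signedPoint w) = ↑(Finset.univ.image (signedPoint w)) := by simp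
  have hmul : ∀ t, (∏ i, f i (t i)) * (Set.range (signedPoint w)).indicator 1 t =
      (Set.range (signedPoint w)).indicator (fun t => ∏ i, f i (t i)) t := fun t => by
    by_cases ht : t ∈ Set.range (signedPoint w) <;> simp [ht]
  simp only [expZ, hyp_eq_indicator, hmul]
  rw [hrange, Finset.sum_indicator_subset _ (Finset.image_subset_iff.2 fun p _ =>
      signedPoint_mem_piFinset w p), Finset.sum_image fun p _ q _ h => signedPoint_injective w h]

variable (ε : ℝ) (v : Fin n → Fin k → Bool)

lemma marg_sgn_mul (i : Fin n) (j : Fin k) (b : Bool) :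
    marg n k ε v i (sgn b * ((j : ℤ) + 1)) =
      if v i j = b then (1 + ε) / (2 * n * k) else (1 - ε) / (2 * n * k) := by
  have hj := j.isLt
  have habs : (sgn b * ((j : ℤ) + 1)).natAbs = j + 1 := by rw [natAbs_sgn_mul]; omega
  have hpos : (0 < sgn b * ((j : ℤ) + 1)) = (b = true) := by cases b <;> simp [sgn]
  rw [marg, if_neg (by omega), dif_pos (by omega)]
  simp only [habs, Nat.add_sub_cancel, Fin.eta, hpos]
  cases b <;> cases v i j <;> simp

lemma prod_marg_signedPoint (w : Fin n → Fin k → Bool) (p : Fin n × Fin k) :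
    ∏ i, marg n k ε v i (signedPoint w p i) = (1 - 1 / (n : ℝ)) ^ (n - 1) *
      if v p.1 p.2 = w p.1 p.2 then (1 + ε) / (2 * n * k) else (1 - ε) / (2 * n * k) := by
  rw [signedPoint, prod_apply_single_of_apply_zero (marg n k ε v) (c := 1 - 1 / (n : ℝ))
    (fun _ => if_pos rfl), Fintype.card_fin, marg_sgn_mul]

end HardInstance

theorem stmt2_general (n k : ℕ) (ε : ℝ)
    (v v' : Fin n → Fin k → Bool) :
    expZ n k (marg n k ε v) (hyp n k v) - expZ n k (marg n k ε v) (hyp n k v')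
      = (1 - 1 / (n : ℝ)) ^ (n - 1) * (ε / (n * k)) * (hamming v v' : ℝ) := by
  have hterm : ∀ p : Fin n × Fin k,
      (1 + ε) / (2 * n * k) -
          (if v p.1 p.2 = v' p.1 p.2 then (1 + ε) / (2 * n * k) else (1 - ε) / (2 * n * k)) =
      ε / (n * k) * if v p.1 p.2 ≠ v' p.1 p.2 then 1 else 0 := by
    intro p
    by_cases h : v p.1 p.2 = v' p.1 p.2
    · simp [h]
    · simp only [h, if_true, if_false, ne_eq, not_false_eq_true]
      ring
  simp only [expZ_hyp, prod_marg_signedPoint, if_true, ← Finset.mul_sum, ← mul_sub,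
    ← Finset.sum_sub_distrib]
  rw [Finset.sum_congr rfl fun p _ => hterm p, ← Finset.mul_sum, Finset.sum_boole, hamming,
    mul_assoc]

theorem stmt2 (n k : ℕ) (hn : 1 ≤ n) (hk : 1 ≤ k) (ε : ℝ) (hε : ε ∈ Set.Ioo (0 : ℝ) 1)
    (v v' : Fin n → Fin k → Bool) :
    expZ n k (marg n k ε v) (hyp n k v) - expZ n k (marg n k ε v) (hyp n k v')
      = (1 - 1 / (n : ℝ)) ^ (n - 1) * (ε / (n * k)) * (hamming v v' : ℝ) :=
  stmt2_general n k ε v v'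
end

section
/- Let T = {0, ±1, …, ±k} and, for v ∈ {±1}^{n×k}, let D^v be the product distribution on T^n whose i-th marginal puts mass 1−1/n on 0, mass (1+ε)/(2nk) on v_{i,j}·j and mass (1−ε)/(2nk) on −v_{i,j}·j for each j ∈ [k]. There exist absolute constants c, c' > 0 such that: for any index pair (i,j), any v̄, v that agree everywhere except at (i,j) with v̄_{i,j} = +1 and v_{i,j} = −1, and any (possibly randomized) function A mapping N-tuples of points of T^n to {±1}^{n×k}, if N ≤ c·nk/ε² then Pr_{s∼(D^{v̄})^N}[A(s)_{i,j} ≠ +1] + Pr_{s∼(D^{v})^N}[A(s)_{i,j} ≠ −1] ≥ c'. -/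
/-!
Le Cam's two-point method, with the Bhattacharyya coefficient `ρ = ∑ √(P Q)` in place of the
total variation distance. Whatever the guesser, its two error probabilities add up to at least
`∑ min (P, Q)`, and Cauchy–Schwarz applied to `√(P Q) = √(min P Q) · √(max P Q)`, with
`∑ max (P, Q) ≤ 2`, gives `∑ min (P, Q) ≥ ρ² / 2`.

The coefficient is multiplicative over the `N` samples and the `n` independent coordinates. The
marginals of `D^v̄` and `D^v` coincide except at coordinate `i`, where they only swap the masses
`(1 ± ε) / (2nk)` at `±(j + 1)`; that coordinate contributes
`1 - 2 / (2nk) + 2 √(1 - ε²) / (2nk) ≥ 1 - ε² / (nk)`. Hence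
`ρ ≥ (1 - ε² / (nk)) ^ N ≥ 1 - N ε² / (nk) ≥ 1 / 2` as soon as `N ≤ nk / (2 ε²)`, and the sum of the
two errors is at least `1 / 8`.
-/

open Finset

section LeCam

variable {ι : Type*} (s : Finset ι) {P Q : ι → ℝ}

theorem sq_sum_sqrt_mul_le_sum_min_mul (hP : ∀ x ∈ s, 0 ≤ P x) (hQ : ∀ x ∈ s, 0 ≤ Q x) :
    (∑ x ∈ s, √(P x * Q x)) ^ 2 ≤
      (∑ x ∈ s, min (P x) (Q x)) * (∑ x ∈ s, P x + ∑ x ∈ s, Q x) := by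
  have hmin : ∀ x ∈ s, 0 ≤ min (P x) (Q x) := fun x hx => le_min (hP x hx) (hQ x hx)
  calc _ ≤ (∑ x ∈ s, min (P x) (Q x)) * ∑ x ∈ s, max (P x) (Q x) :=
        sum_sq_le_sum_mul_sum_of_sq_le_mul s hmin (fun x hx => le_max_of_le_left (hP x hx))
          fun x hx => by rw [min_mul_max, Real.sq_sqrt (mul_nonneg (hP x hx) (hQ x hx))]
    _ ≤ _ := by
        rw [← sum_add_distrib]
        gcongr with x hx
        · exact sum_nonneg hmin
        · exact max_le_add_of_nonneg (hP x hx) (hQ x hx)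

theorem sum_min_le_sum_mul_add_sum_mul {a b : ι → ℝ} (ha : ∀ x ∈ s, 0 ≤ a x)
    (hb : ∀ x ∈ s, 0 ≤ b x) (hab : ∀ x ∈ s, a x + b x = 1) :
    ∑ x ∈ s, min (P x) (Q x) ≤ ∑ x ∈ s, P x * a x + ∑ x ∈ s, Q x * b x := by
  rw [← sum_add_distrib]
  refine sum_le_sum fun x hx => ?_
  calc min (P x) (Q x) = min (P x) (Q x) * a x + min (P x) (Q x) * b x := by
        rw [← mul_add, hab x hx, mul_one]
    _ ≤ P x * a x + Q x * b x :=
        add_le_add (mul_le_mul_of_nonneg_right (min_le_left _ _) (ha x hx))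
          (mul_le_mul_of_nonneg_right (min_le_right _ _) (hb x hx))

theorem sq_sum_sqrt_mul_div_two_le {a b : ι → ℝ} (hP : ∀ x ∈ s, 0 ≤ P x)
    (hQ : ∀ x ∈ s, 0 ≤ Q x) (hP₁ : ∑ x ∈ s, P x = 1) (hQ₁ : ∑ x ∈ s, Q x = 1)
    (ha : ∀ x ∈ s, 0 ≤ a x) (hb : ∀ x ∈ s, 0 ≤ b x) (hab : ∀ x ∈ s, a x + b x = 1) :
    (∑ x ∈ s, √(P x * Q x)) ^ 2 / 2 ≤ ∑ x ∈ s, P x * a x + ∑ x ∈ s, Q x * b x := by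
  have h := sq_sum_sqrt_mul_le_sum_min_mul s hP hQ
  rw [hP₁, hQ₁] at h
  linarith [sum_min_le_sum_mul_add_sum_mul s ha hb hab (P := P) (Q := Q)]

end LeCam

theorem one_sub_sq_div_le_sqrt_mul {ε : ℝ} (hε : ε ^ 2 ≤ 1) (D : ℝ) :
    (1 - ε ^ 2) / D ≤ √((1 + ε) / D * ((1 - ε) / D)) := by
  apply Real.le_sqrt_of_sq_le
  rw [div_pow, div_mul_div_comm, ← sq]
  gcongr
  nlinarith

theorem Tbox_eq (k : ℕ) :
    Tbox k = insert 0 (univ.image (fun j : Fin k => (j : ℤ) + 1) ∪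
      univ.image (fun j : Fin k => -((j : ℤ) + 1))) := by
  ext x
  simp only [Tbox, mem_Icc, mem_insert, mem_union, mem_image, mem_univ, true_and]
  constructor
  · rintro ⟨hlo, hhi⟩
    rcases lt_trichotomy x 0 with hx | hx | hx
    · exact Or.inr (Or.inr ⟨⟨(-x).toNat - 1, by omega⟩, by simp; omega⟩)
    · exact Or.inl hx
    · exact Or.inr (Or.inl ⟨⟨x.toNat - 1, by omega⟩, by simp; omega⟩)
  · rintro (rfl | ⟨j, rfl⟩ | ⟨j, rfl⟩) <;> omega

theorem sum_Tbox {M : Type*} [AddCommMonoid M] (k : ℕ) (F : ℤ → M) :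
    ∑ x ∈ Tbox k, F x = F 0 + ∑ j : Fin k, (F ((j : ℤ) + 1) + F (-((j : ℤ) + 1))) := by
  have hinj₁ : Function.Injective fun j : Fin k => (j : ℤ) + 1 := fun a b h => by
    simpa [Fin.ext_iff] using h
  have hinj₂ : Function.Injective fun j : Fin k => -((j : ℤ) + 1) := fun a b h => by
    simpa [Fin.ext_iff] using h
  have hdisj : Disjoint (univ.image fun j : Fin k => (j : ℤ) + 1)
      (univ.image fun j : Fin k => -((j : ℤ) + 1)) := by
    simp only [disjoint_left, mem_image, mem_univ, true_and]
    rintro _ ⟨a, rfl⟩ ⟨b, hb⟩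
    omega
  rw [Tbox_eq, sum_insert (by simp only [mem_union, mem_image, mem_univ, true_and]; omega),
    sum_union hdisj, sum_image hinj₁.injOn, sum_image hinj₂.injOn, sum_add_distrib]

section HardDistribution

variable {n k : ℕ} {ε : ℝ}

theorem marg_zero (v : Fin n → Fin k → Bool) (i : Fin n) :
    marg n k ε v i 0 = 1 - 1 / n := by
  simp [marg]

theorem marg_succ (v : Fin n → Fin k → Bool) (i : Fin n) (j : Fin k) :
    marg n k ε v i ((j : ℤ) + 1) = (1 + sgn (v i j) * ε) / (2 * n * k) := by
  have hj : (((j : ℤ) + 1).natAbs - 1) = j := by omega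
  rw [marg, if_neg (by omega), dif_pos (by omega)]
  simp only [hj, Fin.eta]
  have hpos : (0 : ℤ) < j + 1 := by omega
  cases v i j <;> simp [sgn, hpos, sub_eq_add_neg]

theorem marg_neg_succ (v : Fin n → Fin k → Bool) (i : Fin n) (j : Fin k) :
    marg n k ε v i (-((j : ℤ) + 1)) = (1 - sgn (v i j) * ε) / (2 * n * k) := by
  have hj : ((-((j : ℤ) + 1)).natAbs - 1) = j := by omega
  rw [marg, if_neg (by omega), dif_pos (by omega)]
  simp only [hj, Fin.eta]
  cases v i j <;> simp [sgn, sub_eq_add_neg]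

theorem marg_congr {v w : Fin n → Fin k → Bool} {i : Fin n} (h : v i = w i) :
    marg n k ε v i = marg n k ε w i := by
  funext x
  simp only [marg, h]

theorem marg_nonneg (hε : |ε| ≤ 1) (v : Fin n → Fin k → Bool) (i : Fin n) (x : ℤ) :
    0 ≤ marg n k ε v i x := by
  obtain ⟨hε₁, hε₂⟩ := abs_le.mp hε
  unfold marg
  split_ifs
  · exact Nat.one_sub_one_div_cast_nonneg n
  · exact div_nonneg (by linarith) (by positivity)
  · exact div_nonneg (by linarith) (by positivity)
  · exact le_rfl

theorem sum_marg (hn : n ≠ 0) (hk : k ≠ 0) (v : Fin n → Fin k → Bool) (i : Fin n) :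
    ∑ x ∈ Tbox k, marg n k ε v i x = 1 := by
  have hpair : ∀ j : Fin k, marg n k ε v i ((j : ℤ) + 1) + marg n k ε v i (-((j : ℤ) + 1)) =
      2 / (2 * n * k) := fun j => by
    rw [marg_succ, marg_neg_succ]; ring
  simp only [sum_Tbox, marg_zero, hpair, sum_const, card_univ, Fintype.card_fin, nsmul_eq_mul]
  field_simp
  ring

theorem sum_sqrt_marg_mul_self (hn : n ≠ 0) (hk : k ≠ 0) (hε : |ε| ≤ 1)
    (v : Fin n → Fin k → Bool) (i : Fin n) :
    ∑ x ∈ Tbox k, √(marg n k ε v i x * marg n k ε v i x) = 1 := by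
  simp only [Real.sqrt_mul_self (marg_nonneg hε v i _), sum_marg hn hk]

theorem one_sub_le_sum_sqrt_marg_mul (hn : n ≠ 0) (hk : k ≠ 0) (hε : |ε| ≤ 1)
    {v w : Fin n → Fin k → Bool} {i : Fin n} {j : Fin k} (hv : v i j = true)
    (hw : w i j = false) (hvw : ∀ j', j' ≠ j → v i j' = w i j') :
    1 - ε ^ 2 / (n * k) ≤ ∑ x ∈ Tbox k, √(marg n k ε v i x * marg n k ε w i x) := by
  have hε2 : ε ^ 2 ≤ 1 := (sq_le_one_iff_abs_le_one ε).mpr hε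
  have hterm : ∀ j' : Fin k, 2 / (2 * n * k) - (if j' = j then 2 * ε ^ 2 / (2 * n * k) else 0) ≤
      √(marg n k ε v i ((j' : ℤ) + 1) * marg n k ε w i ((j' : ℤ) + 1)) +
        √(marg n k ε v i (-((j' : ℤ) + 1)) * marg n k ε w i (-((j' : ℤ) + 1))) := by
    intro j'
    by_cases hj' : j' = j
    · subst hj'
      have h := one_sub_sq_div_le_sqrt_mul hε2 (2 * n * k)
      rw [if_pos rfl, marg_succ, marg_neg_succ, marg_succ, marg_neg_succ, hv, hw]
      norm_num [sgn, ← sub_eq_add_neg]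
      rw [mul_comm ((1 - ε) / _)]
      have : 2 / (2 * n * k) - 2 * ε ^ 2 / (2 * n * k) = 2 * ((1 - ε ^ 2) / (2 * n * k)) := by
        ring
      linarith
    · have e₁ : marg n k ε w i ((j' : ℤ) + 1) = marg n k ε v i ((j' : ℤ) + 1) := by
        rw [marg_succ, marg_succ, hvw j' hj']
      have e₂ : marg n k ε w i (-((j' : ℤ) + 1)) = marg n k ε v i (-((j' : ℤ) + 1)) := by
        rw [marg_neg_succ, marg_neg_succ, hvw j' hj']
      rw [if_neg hj', e₁, e₂, Real.sqrt_mul_self (marg_nonneg hε v i _),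
        Real.sqrt_mul_self (marg_nonneg hε v i _), marg_succ, marg_neg_succ]
      apply le_of_eq
      ring
  calc 1 - ε ^ 2 / (n * k) = (1 - 1 / n) + ∑ j' : Fin k,
        ((2 : ℝ) / (2 * n * k) - (if j' = j then 2 * ε ^ 2 / (2 * n * k) else 0)) := by
        rw [sum_sub_distrib, sum_ite_eq' univ j, if_pos (mem_univ j), sum_const, card_univ,
          Fintype.card_fin, nsmul_eq_mul]
        field_simp
        ring
    _ ≤ _ := by
        rw [sum_Tbox, marg_zero, marg_zero, Real.sqrt_mul_self (Nat.one_sub_one_div_cast_nonneg n)]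
        gcongr with j'
        exact hterm j'

theorem sq_div_mul_le_one (hn : n ≠ 0) (hk : k ≠ 0) (hε : |ε| ≤ 1) : ε ^ 2 / (n * k) ≤ 1 := by
  have hn₁ : (1 : ℝ) ≤ n := Nat.one_le_cast.mpr (Nat.one_le_iff_ne_zero.mpr hn)
  have hk₁ : (1 : ℝ) ≤ k := Nat.one_le_cast.mpr (Nat.one_le_iff_ne_zero.mpr hk)
  exact div_le_one_of_le₀ (((sq_le_one_iff_abs_le_one ε).mpr hε).trans
    (one_le_mul_of_one_le_of_one_le hn₁ hk₁)) (by positivity)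

end HardDistribution

section Sample

variable {n k N : ℕ} {ε : ℝ}

theorem sum_sampleBox_prod (F : Fin n → ℤ → ℝ) :
    ∑ s ∈ sampleBox n k N, ∏ m, ∏ i, F i (s m i) = (∏ i, ∑ x ∈ Tbox k, F i x) ^ N := by
  rw [sampleBox, ← prod_univ_sum (fun _ => Fintype.piFinset fun _ => Tbox k)
    fun _ t => ∏ i, F i (t i)]
  rw [prod_congr rfl fun _ _ => (prod_univ_sum (fun _ => Tbox k) F).symm, prod_const, card_univ,
    Fintype.card_fin]

theorem sampleP_nonneg (hε : |ε| ≤ 1) (v : Fin n → Fin k → Bool) (s : Fin N → Fin n → ℤ) :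
    0 ≤ sampleP n k N ε v s :=
  prod_nonneg fun m _ => prod_nonneg fun i _ => marg_nonneg hε v i (s m i)

theorem sum_sampleP (hn : n ≠ 0) (hk : k ≠ 0) (v : Fin n → Fin k → Bool) :
    ∑ s ∈ sampleBox n k N, sampleP n k N ε v s = 1 := by
  simp only [sampleP, sum_sampleBox_prod, sum_marg hn hk, prod_const_one, one_pow]

theorem sum_sqrt_sampleP_mul (hε : |ε| ≤ 1) (v w : Fin n → Fin k → Bool) :
    ∑ s ∈ sampleBox n k N, √(sampleP n k N ε v s * sampleP n k N ε w s) =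
      (∏ i, ∑ x ∈ Tbox k, √(marg n k ε v i x * marg n k ε w i x)) ^ N := by
  have hmul : ∀ i x, 0 ≤ marg n k ε v i x * marg n k ε w i x := fun i x =>
    mul_nonneg (marg_nonneg hε v i x) (marg_nonneg hε w i x)
  rw [← sum_sampleBox_prod]
  refine sum_congr rfl fun s _ => ?_
  rw [sampleP, sampleP, ← prod_mul_distrib, Real.sqrt_prod _ fun m _ => ?_]
  · simp only [← prod_mul_distrib, Real.sqrt_prod _ fun i _ => hmul i _]
  · rw [← prod_mul_distrib]
    exact prod_nonneg fun i _ => hmul i _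

theorem one_sub_pow_le_sum_sqrt_sampleP_mul (hn : n ≠ 0) (hk : k ≠ 0) (hε : |ε| ≤ 1)
    {v w : Fin n → Fin k → Bool} {i : Fin n} {j : Fin k} (hv : v i j = true)
    (hw : w i j = false) (hvw : ∀ i' j', (i', j') ≠ (i, j) → v i' j' = w i' j') :
    (1 - ε ^ 2 / (n * k)) ^ N ≤
      ∑ s ∈ sampleBox n k N, √(sampleP n k N ε v s * sampleP n k N ε w s) := by
  have hprod : ∏ i', ∑ x ∈ Tbox k, √(marg n k ε v i' x * marg n k ε w i' x) =
      ∑ x ∈ Tbox k, √(marg n k ε v i x * marg n k ε w i x) := by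
    refine prod_eq_single_of_mem i (mem_univ i) fun i' _ hi' => ?_
    have hvw' : v i' = w i' := funext fun j' => hvw i' j' (by simp [hi'])
    rw [← marg_congr hvw', sum_sqrt_marg_mul_self hn hk hε]
  rw [sum_sqrt_sampleP_mul hε, hprod]
  exact pow_le_pow_left₀ (sub_nonneg.mpr (sq_div_mul_le_one hn hk hε))
    (one_sub_le_sum_sqrt_marg_mul hn hk hε hv hw fun j' hj' => hvw i j' (by simp [hj'])) N

end Sample

open Classical in
theorem stmt3 :
    ∃ c c' : ℝ, 0 < c ∧ 0 < c' ∧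
      ∀ n k : ℕ, 1 ≤ n → 1 ≤ k →
      ∀ ε : ℝ, ε ∈ Set.Ioo (0 : ℝ) 1 →
      ∀ (i : Fin n) (j : Fin k) (vbar vlow : Fin n → Fin k → Bool),
        vbar i j = true → vlow i j = false →
        (∀ (i' : Fin n) (j' : Fin k), (i', j') ≠ (i, j) → vbar i' j' = vlow i' j') →
      ∀ N : ℕ, (N : ℝ) ≤ c * (n * k : ℝ) / ε ^ 2 →
      ∀ A : (Fin N → Fin n → ℤ) → (Fin n → Fin k → Bool) → ℝ,
        (∀ s, (∀ w, 0 ≤ A s w) ∧ ∑ w : Fin n → Fin k → Bool, A s w = 1) →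
        c' ≤
          (∑ s ∈ sampleBox n k N, sampleP n k N ε vbar s *
              ∑ w ∈ Finset.univ.filter (fun w : Fin n → Fin k → Bool => w i j ≠ true),
                A s w)
          + ∑ s ∈ sampleBox n k N, sampleP n k N ε vlow s *
              ∑ w ∈ Finset.univ.filter (fun w : Fin n → Fin k → Bool => w i j ≠ false),
                A s w := by
  refine ⟨1 / 2, 1 / 8, by norm_num, by norm_num, ?_⟩
  intro n k hn hk ε ⟨hε₀, hε₁⟩ i j vbar vlow hv hw hvw N hN A hA
  have hn₀ : n ≠ 0 := Nat.one_le_iff_ne_zero.mp hn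
  have hk₀ : k ≠ 0 := Nat.one_le_iff_ne_zero.mp hk
  have hε : |ε| ≤ 1 := abs_le.mpr ⟨by linarith, hε₁.le⟩
  have hNε : N * (ε ^ 2 / (n * k)) ≤ 1 / 2 := by
    rw [le_div_iff₀ (by positivity)] at hN
    rw [mul_div_assoc', div_le_iff₀ (by positivity)]
    linarith
  have hρ : 1 / 2 ≤ ∑ s ∈ sampleBox n k N, √(sampleP n k N ε vbar s * sampleP n k N ε vlow s) :=
    calc (1 : ℝ) / 2 ≤ 1 + N * -(ε ^ 2 / (n * k)) := by linarith
      _ ≤ (1 + -(ε ^ 2 / (n * k))) ^ N :=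
          one_add_mul_le_pow (by linarith [sq_div_mul_le_one hn₀ hk₀ hε]) N
      _ ≤ _ := by
          rw [← sub_eq_add_neg]
          exact one_sub_pow_le_sum_sqrt_sampleP_mul hn₀ hk₀ hε hv hw hvw
  have hsplit : ∀ s, ∑ w ∈ univ.filter (fun w : Fin n → Fin k → Bool => w i j ≠ true), A s w +
      ∑ w ∈ univ.filter (fun w : Fin n → Fin k → Bool => w i j ≠ false), A s w = 1 := by
    intro s
    simp only [ne_eq, Bool.not_eq_false, ← (hA s).2]
    rw [add_comm, sum_filter_add_sum_filter_not]
  have hLeCam := sq_sum_sqrt_mul_div_two_le (sampleBox n k N)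
    (fun s _ => sampleP_nonneg hε vbar s) (fun s _ => sampleP_nonneg hε vlow s)
    (sum_sampleP hn₀ hk₀ vbar) (sum_sampleP hn₀ hk₀ vlow)
    (fun s _ => sum_nonneg fun w _ => (hA s).1 w) (fun s _ => sum_nonneg fun w _ => (hA s).1 w)
    (fun s _ => hsplit s)
  linarith [pow_le_pow_left₀ (by norm_num) hρ 2]
end
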